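/- Suppose Assumptions A and B hold. Let x^r ∈ X, y^r ∈ Y, β > 0, and for each i let x_i^{r+1} = argmin_{x_i ∈ X_i} U_i(x_i; w_i^{r+1}, y^r) + h_i(x_i) + (β/2)‖x_i − x_i^r‖², where w_i^{r+1} := (x_1^{r+1},…,x_{i−1}^{r+1}, x_i^r,…,x_K^r). Then for each i = 1,…,K, β ‖x_i^r − Px_i^β(x_i^r − (1/β)∇_{x_i} f(x^r, y^r))‖ ≤ (β + L_{u_i} + L_{x_i}) ‖x^{r+1} − x^r‖, i.e., the i-th block of the stationarity gap at (x^r, y^r) is bounded by a constant multiple of the successive difference of iterates. -/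

import Mathlib

/-!
Write `w = wMix x x' i` and `pᵢ = Pxᵢ(xᵢ - β⁻¹∇ᵢf(x, y))`. By the first-order optimality condition
of its block subproblem, `x'ᵢ` is the proximal point of `xᵢ - β⁻¹∇Uᵢ(x'ᵢ; w, y)`, while `pᵢ` is the
proximal point of `xᵢ - β⁻¹∇ᵢf(x, y)`. Nonexpansiveness of the proximal map then gives
`β‖x'ᵢ - pᵢ‖ ≤ ‖∇Uᵢ(x'ᵢ; w, y) - ∇ᵢf(x, y)‖`, and gradient consistency `∇Uᵢ(xᵢ; w, y) = ∇ᵢf(w, y)`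
together with the two Lipschitz bounds turns this into `L_{uᵢ}‖x'ᵢ - xᵢ‖ + L_{xᵢ}‖w - x‖`, both
norms being at most `‖x' - x‖`. The triangle inequality through `x'ᵢ` finishes.
-/

open scoped RealInnerProductSpace

/-- The `i`-th block space `ℝ^N`. -/
abbrev Blk (N : ℕ) : Type := EuclideanSpace ℝ (Fin N)

/-- The full `x`-space `ℝ^{NK}`, with the Euclidean (ℓ²) product norm. -/
abbrev XVec (N K : ℕ) : Type := PiLp 2 (fun _ : Fin K => Blk N)

/-- The `y`-space `ℝ^M`. -/
abbrev YVec (M : ℕ) : Type := EuclideanSpace ℝ (Fin M)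

/-- `hibsaW xs r i = w_i^{r+1} = (x_1^{r+1},…,x_{i−1}^{r+1}, x_i^r,…,x_K^r)`. -/
noncomputable def hibsaW {N K : ℕ} (xs : ℕ → XVec N K) (r : ℕ) (i : Fin K) : XVec N K :=
  WithLp.toLp 2 fun j => if (j : ℕ) < (i : ℕ) then xs (r + 1) j else xs r j

/-- Replace the `i`-th block of `x` by `z`. -/
noncomputable def blockUpdate {N K : ℕ} (x : XVec N K) (i : Fin K) (z : Blk N) : XVec N K :=
  WithLp.toLp 2 (Function.update x i z)

/-- `wMix x x' i = (x'_1,…,x'_{i−1}, x_i,…,x_K)`: the blocks before `i` already updated. -/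
noncomputable def wMix {N K : ℕ} (x x' : XVec N K) (i : Fin K) : XVec N K :=
  WithLp.toLp 2 fun j => if (j : ℕ) < (i : ℕ) then x' j else x j

open Set

theorem IsMinOn.hasFDerivAt_apply_sub_add_sub_nonneg {E : Type*} [NormedAddCommGroup E]
    [NormedSpace ℝ E] {S : Set E} {φ h : E → ℝ} {φ' : E →L[ℝ] ℝ} {q z : E}
    (hmin : IsMinOn (φ + h) S q) (hh : ConvexOn ℝ S h) (hφ : HasFDerivAt φ φ' q)
    (hq : q ∈ S) (hz : z ∈ S) : 0 ≤ φ' (z - q) + (h z - h q) := by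
  -- `h` lies below its chord on `[q, z]`, so `F` is minimal on `[0, 1]` at `0`.
  set F : ℝ → ℝ := fun t => φ (q + t • (z - q)) + t * (h z - h q)
  have hline (t : ℝ) : q + t • (z - q) = (1 - t) • q + t • z := by module
  have hFmin : IsMinOn F (Icc 0 1) 0 := by
    intro t ht
    have hchord := hh.2 hq hz (sub_nonneg.2 ht.2) ht.1 (sub_add_cancel 1 t)
    have hmin_t := hmin (hline t ▸ hh.1 hq hz (sub_nonneg.2 ht.2) ht.1 (sub_add_cancel 1 t))
    simp only [mem_ofPred_eq, Pi.add_apply, hline t, smul_eq_mul] at hchord hmin_t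
    simp only [F, hline t, zero_smul, add_zero, zero_mul, mem_ofPred_eq]
    linarith
  have hF : HasDerivAt F (φ' (z - q) + (h z - h q)) 0 := by
    have hline' : HasDerivAt (fun t : ℝ => φ (q + t • (z - q))) (φ' (z - q)) 0 :=
      hφ.hasLineDerivAt (z - q)
    simpa only [one_mul] using hline'.fun_add ((hasDerivAt_id' (0 : ℝ)).mul_const (h z - h q))
  have hone : (1 : ℝ) ∈ posTangentConeAt (Icc 0 1) 0 :=
    mem_posTangentConeAt_of_segment_subset (by rw [zero_add, segment_eq_Icc zero_le_one])
  simpa using hFmin.localize.hasFDerivWithinAt_nonneg hF.hasFDerivAt.hasFDerivWithinAt hone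

theorem IsMinOn.inner_gradient_add_smul_sub_nonneg {E : Type*} [NormedAddCommGroup E]
    [InnerProductSpace ℝ E] [CompleteSpace E] {S : Set E} {φ h : E → ℝ} {G a q z : E} {β : ℝ}
    (hmin : IsMinOn (fun u => φ u + h u + β / 2 * ‖u - a‖ ^ 2) S q) (hh : ConvexOn ℝ S h)
    (hφ : HasGradientAt φ G q) (hq : q ∈ S) (hz : z ∈ S) :
    0 ≤ ⟪G + β • (q - a), z - q⟫ + (h z - h q) := by
  have hsmooth := (hasGradientAt_iff_hasFDerivAt.mp hφ).add
    (((hasFDerivAt_id q).sub_const a).norm_sq.const_mul (β / 2))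
  have := (show IsMinOn ((fun u => φ u + β / 2 * ‖u - a‖ ^ 2) + h) S q from
    fun u hu => by simpa only [mem_ofPred_eq, Pi.add_apply, add_right_comm] using hmin hu
    ).hasFDerivAt_apply_sub_add_sub_nonneg hh hsmooth hq hz
  simp only [id_eq, add_apply, InnerProductSpace.toDual_apply_apply, smul_apply,
    ContinuousLinearMap.comp_id, coe_innerSL_apply, nsmul_eq_mul, Nat.cast_ofNat, smul_eq_mul,
    inner_sub_left] at this
  rw [inner_add_left, real_inner_smul_left, inner_sub_left]
  linear_combination this

theorem IsMinOn.inner_add_smul_sub_nonneg_of_prox {E : Type*} [NormedAddCommGroup E]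
    [InnerProductSpace ℝ E] [CompleteSpace E] {S : Set E} {h : E → ℝ} {g a p z : E} {β : ℝ}
    (hβ : β ≠ 0) (hmin : IsMinOn (fun u => h u + β / 2 * ‖u - (a - β⁻¹ • g)‖ ^ 2) S p)
    (hh : ConvexOn ℝ S h) (hp : p ∈ S) (hz : z ∈ S) :
    0 ≤ ⟪g + β • (p - a), z - p⟫ + (h z - h p) := by
  have hcentre : β • (p - (a - β⁻¹ • g)) = g + β • (p - a) := by
    simp only [smul_sub, smul_smul, mul_inv_cancel₀ hβ, one_smul]; abel
  have := IsMinOn.inner_gradient_add_smul_sub_nonneg (φ := fun _ => 0)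
    (by simpa only [zero_add] using hmin) hh (hasGradientAt_const p 0) hp hz
  rwa [zero_add, hcentre] at this

-- Nonexpansiveness of the proximal map, read off the optimality conditions of two
-- proximal-gradient steps from `a`.
theorem mul_norm_sub_le_norm_sub_of_inner_add_smul_sub_nonneg {E : Type*}
    [NormedAddCommGroup E] [InnerProductSpace ℝ E] {h : E → ℝ} {G G' a p q : E} {β : ℝ}
    (hq : 0 ≤ ⟪G + β • (q - a), p - q⟫ + (h p - h q))
    (hp : 0 ≤ ⟪G' + β • (p - a), q - p⟫ + (h q - h p)) :
    β * ‖q - p‖ ≤ ‖G - G'‖ := by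
  have hsum : β * ‖q - p‖ ^ 2 ≤ ⟪G - G', p - q⟫ := by
    have hsplit : G - G' = (G + β • (q - a)) - (G' + β • (p - a)) + β • (p - q) := by module
    rw [← neg_sub p q, inner_neg_right] at hp
    rw [hsplit, inner_add_left, inner_sub_left, real_inner_smul_left, real_inner_self_eq_norm_sq,
      norm_sub_rev p q]
    linarith
  rcases (norm_nonneg (q - p)).eq_or_lt with h0 | hpos
  · rw [← h0, mul_zero]; exact norm_nonneg _
  · refine le_of_mul_le_mul_right ?_ hpos
    calc β * ‖q - p‖ * ‖q - p‖ = β * ‖q - p‖ ^ 2 := by ring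
      _ ≤ ⟪G - G', p - q⟫ := hsum
      _ ≤ ‖G - G'‖ * ‖q - p‖ := norm_sub_rev p q ▸ real_inner_le_norm _ _

theorem PiLp.norm_le_norm_of_forall_norm_apply_le {ι : Type*} [Fintype ι] {β : ι → Type*}
    [∀ i, SeminormedAddCommGroup (β i)] {u v : PiLp 2 β} (h : ∀ i, ‖u i‖ ≤ ‖v i‖) :
    ‖u‖ ≤ ‖v‖ := by
  rw [PiLp.norm_eq_of_L2 u, PiLp.norm_eq_of_L2 v]
  exact Real.sqrt_le_sqrt (Finset.sum_le_sum fun i _ => pow_le_pow_left₀ (norm_nonneg _) (h i) 2)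

theorem nonneg_of_norm_sub_le_mul_norm_sub {α E : Type*} [NormedAddCommGroup α]
    [SeminormedAddCommGroup E] {F : α → E} {L : ℝ} {a b : α} (hab : a ≠ b)
    (h : ‖F a - F b‖ ≤ L * ‖a - b‖) : 0 ≤ L :=
  (mul_nonneg_iff_of_pos_right (norm_pos_iff.2 (sub_ne_zero.2 hab))).mp ((norm_nonneg _).trans h)

section wMix

variable {N K : ℕ} (x x' : XVec N K) (i : Fin K)

theorem wMix_apply_self : wMix x x' i i = x i := by
  simp [wMix]

theorem wMix_self : wMix x x i = x := by
  ext j : 1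
  simp [wMix]

theorem wMix_mem {S : Fin K → Set (Blk N)} (hx : ∀ j, x j ∈ S j) (hx' : ∀ j, x' j ∈ S j)
    (j : Fin K) : wMix x x' i j ∈ S j := by
  by_cases hj : j < i <;> simp [wMix, hj, hx, hx']

theorem norm_wMix_sub_le : ‖wMix x x' i - x‖ ≤ ‖x' - x‖ := by
  refine PiLp.norm_le_norm_of_forall_norm_apply_le fun j => ?_
  by_cases hj : j < i <;> simp [wMix, hj]

end wMix

theorem hibsa_gap_x_bound_general
    {N K M : ℕ}
    -- Assumption A
    (Xi : Fin K → Set (Blk N)) (hXiconv : ∀ i, Convex ℝ (Xi i))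
    (Y : Set (YVec M))
    (h : Fin K → Blk N → ℝ) (hhconv : ∀ i, ConvexOn ℝ Set.univ (h i))
    (Gfx : XVec N K → YVec M → XVec N K)
    (Lx : Fin K → ℝ)
    (hLx : ∀ (i : Fin K) (y : YVec M), y ∈ Y → ∀ x x' : XVec N K,
      (∀ j, x j ∈ Xi j) → (∀ j, x' j ∈ Xi j) →
      ‖Gfx x' y i - Gfx x y i‖ ≤ Lx i * ‖x' - x‖)
    -- Assumption B
    (U : Fin K → Blk N → XVec N K → YVec M → ℝ)
    (GU : Fin K → Blk N → XVec N K → YVec M → Blk N)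
    (hGU : ∀ i z w y, HasGradientAt (fun u => U i u w y) (GU i z w y) z)
    (hB2 : ∀ (i : Fin K) (x : XVec N K) (y : YVec M),
      (∀ j, x j ∈ Xi j) → y ∈ Y → GU i (x i) x y = Gfx x y i)
    (Lu : Fin K → ℝ)
    (hB4 : ∀ (i : Fin K) (w : XVec N K) (y : YVec M) (z z' : Blk N),
      ‖GU i z w y - GU i z' w y‖ ≤ Lu i * ‖z - z'‖)
    -- one round of HiBSA x-updates
    (β : ℝ) (hβ : 0 < β)
    (x x' : XVec N K) (y : YVec M)
    (hxfeas : ∀ j, x j ∈ Xi j) (hy : y ∈ Y)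
    (hup : ∀ i : Fin K,
      x' i ∈ Xi i ∧
      ∀ z ∈ Xi i,
        U i (x' i) (wMix x x' i) y + h i (x' i) + β / 2 * ‖x' i - x i‖ ^ 2
          ≤ U i z (wMix x x' i) y + h i z + β / 2 * ‖z - x i‖ ^ 2)
    -- the block proximity operators
    (Px : Fin K → Blk N → Blk N)
    (hPx : ∀ (i : Fin K) (v : Blk N), Px i v ∈ Xi i ∧
      ∀ z ∈ Xi i, h i (Px i v) + β / 2 * ‖Px i v - v‖ ^ 2 ≤ h i z + β / 2 * ‖z - v‖ ^ 2) :
    -- conclusion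
    ∀ i : Fin K,
      β * ‖x i - Px i (x i - β⁻¹ • Gfx x y i)‖ ≤ (β + Lu i + Lx i) * ‖x' - x‖ := by
  intro i
  set w := wMix x x' i
  set p := Px i (x i - β⁻¹ • Gfx x y i)
  obtain ⟨hp, hp_min⟩ := hPx i (x i - β⁻¹ • Gfx x y i)
  have hx' : ∀ j, x' j ∈ Xi j := fun j => (hup j).1
  have hw : ∀ j, w j ∈ Xi j := wMix_mem x x' i hxfeas hx'
  have hh := (hhconv i).subset (subset_univ _) (hXiconv i)
  have hupdate : 0 ≤ ⟪GU i (x' i) w y + β • (x' i - x i), p - x' i⟫ + (h i p - h i (x' i)) :=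
    (isMinOn_iff.2 (hup i).2).inner_gradient_add_smul_sub_nonneg hh (hGU ..) (hup i).1 hp
  have hprox : 0 ≤ ⟪Gfx x y i + β • (p - x i), x' i - p⟫ + (h i (x' i) - h i p) :=
    (isMinOn_iff.2 hp_min).inner_add_smul_sub_nonneg_of_prox hβ.ne' hh hp (hup i).1
  have hcons : GU i (x i) w y = Gfx w y i := wMix_apply_self x x' i ▸ hB2 i w y hw hy
  have hstep : β * ‖x' i - p‖ ≤ Lu i * ‖x' i - x i‖ + Lx i * ‖w - x‖ := calc
    β * ‖x' i - p‖ ≤ ‖GU i (x' i) w y - Gfx x y i‖ :=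
      mul_norm_sub_le_norm_sub_of_inner_add_smul_sub_nonneg hupdate hprox
    _ ≤ ‖GU i (x' i) w y - GU i (x i) w y‖ + ‖Gfx w y i - Gfx x y i‖ :=
      hcons ▸ norm_sub_le_norm_sub_add_norm_sub _ _ _
    _ ≤ _ := add_le_add (hB4 ..) (hLx i y hy x w hxfeas hw)
  by_cases hxx : x' = x
  · subst hxx
    simpa [w, wMix_self] using hstep
  obtain ⟨j, hj⟩ := Function.ne_iff.mp ((WithLp.ofLp_injective 2).ne hxx)
  have hLu : 0 ≤ Lu i :=
    nonneg_of_norm_sub_le_mul_norm_sub (F := fun z => GU i z x y) hj (hB4 i x y (x' j) (x j))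
  have hLx : 0 ≤ Lx i :=
    nonneg_of_norm_sub_le_mul_norm_sub (F := fun z => Gfx z y i) hxx (hLx i y hy x x' hxfeas hx')
  calc β * ‖x i - p‖ ≤ β * ‖x' i - x i‖ + β * ‖x' i - p‖ := by
        rw [← mul_add, norm_sub_rev (x' i)]
        gcongr
        exact norm_sub_le_norm_sub_add_norm_sub _ _ _
    _ ≤ β * ‖x' - x‖ + (Lu i * ‖x' - x‖ + Lx i * ‖x' - x‖) := by
        refine add_le_add (by gcongr; exact PiLp.norm_apply_le (x' - x) i) (hstep.trans ?_)
        gcongr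
        · exact PiLp.norm_apply_le (x' - x) i
        · exact norm_wMix_sub_le x x' i
    _ = (β + Lu i + Lx i) * ‖x' - x‖ := by ring

/-- Bound on the `x`-blocks of the stationarity gap by the successive difference of
iterates: under Assumptions A and B, if `x'` is produced from `(x, y)` by one round of
HiBSA block updates with proximal parameter `β > 0`, then for each `i`,
`β‖x_i − Px_i^β(x_i − (1/β)∇_{x_i} f(x, y))‖ ≤ (β + L_{uᵢ} + L_{xᵢ})‖x' − x‖`. -/
theorem hibsa_gap_x_bound
    {N K M : ℕ}
    -- Assumption A
    (f : XVec N K → YVec M → ℝ)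
    (Xi : Fin K → Set (Blk N)) (hXiconv : ∀ i, Convex ℝ (Xi i))
    (hXicomp : ∀ i, IsCompact (Xi i))
    (Y : Set (YVec M)) (hYconv : Convex ℝ Y) (hYcomp : IsCompact Y)
    (h : Fin K → Blk N → ℝ) (hhconv : ∀ i, ConvexOn ℝ Set.univ (h i))
    (g : YVec M → ℝ) (hgconv : ConvexOn ℝ Set.univ g)
    (Gfx : XVec N K → YVec M → XVec N K)
    (hGfx : ∀ x y, HasGradientAt (fun z => f z y) (Gfx x y) x)
    (Lx : Fin K → ℝ)
    (hLx : ∀ (i : Fin K) (y : YVec M), y ∈ Y → ∀ x x' : XVec N K,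
      (∀ j, x j ∈ Xi j) → (∀ j, x' j ∈ Xi j) →
      ‖Gfx x' y i - Gfx x y i‖ ≤ Lx i * ‖x' - x‖)
    -- Assumption B
    (U : Fin K → Blk N → XVec N K → YVec M → ℝ)
    (GU : Fin K → Blk N → XVec N K → YVec M → Blk N)
    (hGU : ∀ i z w y, HasGradientAt (fun u => U i u w y) (GU i z w y) z)
    (μ : Fin K → ℝ) (hμpos : ∀ i, 0 < μ i)
    (hB1 : ∀ (i : Fin K) (w : XVec N K) (y : YVec M), y ∈ Y →
      ∀ z z' : Blk N, z ∈ Xi i → z' ∈ Xi i →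
      ⟪GU i z' w y, z - z'⟫ + μ i / 2 * ‖z - z'‖ ^ 2 ≤ U i z w y - U i z' w y)
    (hB2 : ∀ (i : Fin K) (x : XVec N K) (y : YVec M),
      (∀ j, x j ∈ Xi j) → y ∈ Y → GU i (x i) x y = Gfx x y i)
    (hB3 : ∀ (i : Fin K) (x : XVec N K) (y : YVec M),
      (∀ j, x j ∈ Xi j) → y ∈ Y →
      (∀ z ∈ Xi i, f (blockUpdate x i z) y ≤ U i z x y) ∧ U i (x i) x y = f x y)
    (Lu : Fin K → ℝ)
    (hB4 : ∀ (i : Fin K) (w : XVec N K) (y : YVec M) (z z' : Blk N),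
      ‖GU i z w y - GU i z' w y‖ ≤ Lu i * ‖z - z'‖)
    -- one round of HiBSA x-updates
    (β : ℝ) (hβ : 0 < β)
    (x x' : XVec N K) (y : YVec M)
    (hxfeas : ∀ j, x j ∈ Xi j) (hy : y ∈ Y)
    (hup : ∀ i : Fin K,
      x' i ∈ Xi i ∧
      ∀ z ∈ Xi i,
        U i (x' i) (wMix x x' i) y + h i (x' i) + β / 2 * ‖x' i - x i‖ ^ 2
          ≤ U i z (wMix x x' i) y + h i z + β / 2 * ‖z - x i‖ ^ 2)
    -- the block proximity operators
    (Px : Fin K → Blk N → Blk N)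
    (hPx : ∀ (i : Fin K) (v : Blk N), Px i v ∈ Xi i ∧
      ∀ z ∈ Xi i, h i (Px i v) + β / 2 * ‖Px i v - v‖ ^ 2 ≤ h i z + β / 2 * ‖z - v‖ ^ 2) :
    -- conclusion
    ∀ i : Fin K,
      β * ‖x i - Px i (x i - β⁻¹ • Gfx x y i)‖ ≤ (β + Lu i + Lx i) * ‖x' - x‖ :=
  hibsa_gap_x_bound_general Xi hXiconv Y h hhconv Gfx Lx hLx U GU hGU hB2 Lu hB4 β hβ x x' y hxfeas
    hy hup Px hPx
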